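/- If the entity-relationship graph 𝒢 is bipartite, then for every 𝒳 ∈ 𝔛 the support function satisfies ‖𝒳‖_𝒜^* = (1/2)·λ_max(B(𝒳)), and consequently ‖𝒳‖_𝒜^* ≤ (1/2)·‖B(𝒳)‖_2, where λ_max is the largest eigenvalue and ‖·‖_2 the spectral norm. -/

import Mathlib

open scoped BigOperators
open MeasureTheory ProbabilityTheory Matrix

/-- The conic hull of a set: all finite nonnegative combinations of its elements. -/
def coneHull {E : Type*} [AddCommMonoid E] [Module ℝ E] (s : Set E) : Set E :=
  {x | ∃ (m : ℕ) (l : Fin m → ℝ) (A : Fin m → E),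
    (∀ i, 0 ≤ l i) ∧ (∀ i, A i ∈ s) ∧ x = ∑ i, l i • A i}

/-- Row span of a matrix. -/
def rowSpan {ι κ : Type*} (M : Matrix ι κ ℝ) : Submodule ℝ (κ → ℝ) :=
  Submodule.span ℝ (Set.range M)

/-- Column span of a matrix. -/
def colSpan {ι κ : Type*} (M : Matrix ι κ ℝ) : Submodule ℝ (ι → ℝ) :=
  Submodule.span ℝ (Set.range Mᵀ)

/-- Orthogonality of two subspaces of `κ → ℝ` with respect to the dot product. -/
def PerpSub {κ : Type*} [Fintype κ] (p q : Submodule ℝ (κ → ℝ)) : Prop :=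
  ∀ x ∈ p, ∀ y ∈ q, x ⬝ᵥ y = 0

/-- Spectral norm (largest singular value) of a square real matrix. -/
noncomputable def specNorm {ι : Type*} [Fintype ι] (A : Matrix ι ι ℝ) : ℝ :=
  ⨆ x : {x : ι → ℝ // ∑ i, (x i)^2 = 1}, Real.sqrt (∑ i, (A.mulVec x.1 i)^2)

/-- Largest eigenvalue of a symmetric real matrix (Rayleigh quotient formulation). -/
noncomputable def lambdaMax {ι : Type*} [Fintype ι] (A : Matrix ι ι ℝ) : ℝ :=
  ⨆ x : {x : ι → ℝ // ∑ i, (x i)^2 = 1}, x.1 ⬝ᵥ A.mulVec x.1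

/-- A collective-matrix structure: `K` entity types with `n k` instances each,
`V` views, view `v` relating entity types `r v` (rows) and `c v` (columns),
with at most one view per unordered pair of (distinct) entity types. -/
structure CMStruct where
  K : ℕ
  V : ℕ
  n : Fin K → ℕ
  r : Fin V → Fin K
  c : Fin V → Fin K
  ne : ∀ v, r v ≠ c v
  uniq : ∀ v w : Fin V, (r v = r w ∧ c v = c w) ∨ (r v = c w ∧ c v = r w) → v = w

namespace CMStruct

variable (S : CMStruct)

/-- The index set of size `N = ∑ k, n k`. -/
abbrev Idx := Σ k : Fin S.K, Fin (S.n k)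

/-- `N = ∑ k, n k`. -/
abbrev N : ℕ := ∑ k, S.n k

/-- The space `𝔛` of collective matrices. -/
abbrev Space := ∀ v : Fin S.V, Matrix (Fin (S.n (S.r v))) (Fin (S.n (S.c v))) ℝ

/-- Inner product `⟨𝒳,𝒴⟩ = ∑ v, tr (Xᵥᵀ Yᵥ)`. -/
noncomputable def inner (X Y : S.Space) : ℝ := ∑ v, Matrix.trace ((X v)ᵀ * Y v)

/-- Frobenius norm `‖𝒳‖_F = √⟨𝒳,𝒳⟩`. -/
noncomputable def frobNorm (X : S.Space) : ℝ := Real.sqrt (S.inner X X)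

/-- `P_v` extracts the `(r v, c v)` block of an `N × N` matrix. -/
def Pv (v : Fin S.V) (Z : Matrix S.Idx S.Idx ℝ) :
    Matrix (Fin (S.n (S.r v))) (Fin (S.n (S.c v))) ℝ :=
  Matrix.of fun i j => Z ⟨S.r v, i⟩ ⟨S.c v, j⟩

/-- Place a matrix as the `(k₁,k₂)` block of an `N × N` matrix (zero elsewhere). -/
def place (k₁ k₂ : Fin S.K) (M : Matrix (Fin (S.n k₁)) (Fin (S.n k₂)) ℝ) :
    Matrix S.Idx S.Idx ℝ :=
  Matrix.of fun a b => ∑ i, ∑ j, if a = ⟨k₁, i⟩ ∧ b = ⟨k₂, j⟩ then M i j else 0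

/-- Symmetric block representation `B(𝒳)`. -/
def B (X : S.Space) : Matrix S.Idx S.Idx ℝ :=
  ∑ v, (S.place (S.r v) (S.c v) (X v) + S.place (S.c v) (S.r v) (X v)ᵀ)

/-- Generators of the atom set: `[P_v(u uᵀ)]_v` for unit vectors `u`. -/
def atomGen : Set S.Space :=
  {A | ∃ u : S.Idx → ℝ, (∑ a, (u a)^2 = 1) ∧ A = fun v => S.Pv v (Matrix.vecMulVec u u)}

/-- The atom set `𝒜 = ext (conv {[P_v(u uᵀ)]_v : ‖u‖₂ = 1})`. -/
def atoms : Set S.Space := Set.extremePoints ℝ (convexHull ℝ S.atomGen)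

/-- `𝒳` admits a joint factorization of some finite dimension. -/
def HasJF (X : S.Space) : Prop :=
  ∃ (R : ℕ) (U : ∀ k : Fin S.K, Matrix (Fin (S.n k)) (Fin R) ℝ),
    ∀ v, X v = U (S.r v) * (U (S.c v))ᵀ

/-- `𝔛̄`: collective matrices admitting a joint factorization. -/
def Xbar : Set S.Space := {X | S.HasJF X}

/-- Collective-matrix rank: minimal dimension of a joint factorization. -/
noncomputable def cmRank (X : S.Space) : ℕ :=
  sInf {R | ∃ U : ∀ k : Fin S.K, Matrix (Fin (S.n k)) (Fin R) ℝ,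
    ∀ v, X v = U (S.r v) * (U (S.c v))ᵀ}

/-- The atomic norm: the gauge of `conv 𝒜`. -/
noncomputable def atomicNorm (X : S.Space) : ℝ := gauge (convexHull ℝ S.atoms) X

/-- The support function `‖𝒳‖_𝒜^* = sup {⟨𝒳,𝒜'⟩ : 𝒜' ∈ 𝒜}`. -/
noncomputable def dualNorm (X : S.Space) : ℝ := sSup {t | ∃ A ∈ S.atoms, t = S.inner X A}

/-- The set of "sign" collective matrices `ℰ(ℳ)`. -/
def signSet (M : S.Space) : Set S.Space :=
  {E | S.atomicNorm M = S.inner E M ∧ S.dualNorm E = 1}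

/-- The entity-relationship graph is bipartite (2-colorable). -/
def Bipartite : Prop := ∃ f : Fin S.K → Bool, ∀ v, f (S.r v) ≠ f (S.c v)

/-- The entity-relationship graph `𝒢`. -/
def graph : SimpleGraph (Fin S.K) :=
  SimpleGraph.fromEdgeSet {e | ∃ v, e = s(S.r v, S.c v)}

/-- The standard basis collective matrix `E^{(v,i,j)}`. -/
def stdBasis (v : Fin S.V) (i : Fin (S.n (S.r v))) (j : Fin (S.n (S.c v))) : S.Space :=
  fun w =>
    if h : v = w then
      Matrix.single (Fin.cast (congrArg (fun x => S.n (S.r x)) h) i)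
        (Fin.cast (congrArg (fun x => S.n (S.c x)) h) j) (1 : ℝ)
    else 0

/-- Index type of view entries `(v, i, j)`. -/
abbrev IdxE := Σ v : Fin S.V, Fin (S.n (S.r v)) × Fin (S.n (S.c v))

/-- Standard basis indexed by a view-entry index. -/
def stdE (e : S.IdxE) : S.Space := S.stdBasis e.1 e.2.1 e.2.2

/-- `‖𝒳‖_max = max_{(v,i,j)} |⟨𝒳, E^{(v,i,j)}⟩|`. -/
noncomputable def maxNorm (X : S.Space) : ℝ := ⨆ e : S.IdxE, |S.inner X (S.stdE e)|

/-- Column index type of the entity matrix `𝕏ₖ` (of cardinality `m k`). -/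
def EIdx (k : Fin S.K) : Type :=
  (Σ v : {v : Fin S.V // S.r v = k}, Fin (S.n (S.c v.1))) ⊕
  (Σ v : {v : Fin S.V // S.c v = k}, Fin (S.n (S.r v.1)))

instance (k : Fin S.K) : Fintype (S.EIdx k) := by unfold EIdx; infer_instance

/-- The entity matrix `𝕏ₖ`: horizontal concatenation of the `X v` with `r v = k` and
the `(X v)ᵀ` with `c v = k`. -/
def entityMat (X : S.Space) (k : Fin S.K) : Matrix (Fin (S.n k)) (S.EIdx k) ℝ :=
  Matrix.of fun i e =>
    match e with
    | Sum.inl ⟨v, j⟩ => X v.1 (Fin.cast (congrArg S.n v.2.symm) i) j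
    | Sum.inr ⟨v, j⟩ => X v.1 j (Fin.cast (congrArg S.n v.2.symm) i)

/-- `m k = ∑ v, (n_{c v}·1[r v = k] + n_{r v}·1[c v = k])`, the column dimension of `𝕏ₖ`. -/
def mcol (k : Fin S.K) : ℕ :=
  ∑ v, ((if S.r v = k then S.n (S.c v) else 0) + (if S.c v = k then S.n (S.r v) else 0))

/-- The generating set of the model subspace `T` (for ground truth `M`). -/
def Tset (M : S.Space) : Set S.Space :=
  {Y | S.HasJF Y ∧ ∀ v,
    rowSpan (S.entityMat Y (S.r v)) ≤ rowSpan (S.entityMat M (S.r v)) ∨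
    rowSpan (S.entityMat Y (S.c v)) ≤ rowSpan (S.entityMat M (S.c v))}

/-- The model subspace `T` (the affine hull of `Tset`, which contains `0`,
hence equals the linear span). -/
def Tsub (M : S.Space) : Submodule ℝ S.Space := Submodule.span ℝ (S.Tset M)

/-- `T^⊥`. -/
def Tperp (M : S.Space) : Set S.Space :=
  {Y | S.HasJF Y ∧ ∀ v,
    PerpSub (rowSpan (Y v)) (rowSpan (M v)) ∧ PerpSub (colSpan (Y v)) (colSpan (M v))}

/-- `T^⊥` as a submodule. -/
def TperpSub (M : S.Space) : Submodule ℝ S.Space := Submodule.span ℝ (S.Tperp M)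

/-- `P` is the orthogonal projection onto the subspace `T` of `𝔛`. -/
def IsOrthProj (T : Submodule ℝ S.Space) (P : S.Space → S.Space) : Prop :=
  (∀ X, P X ∈ T) ∧ (∀ X, ∀ Y ∈ T, S.inner (X - P X) Y = 0)

/-- Sampling probabilities `p(v,i,j)·|Ω|⁻¹` where
`p(v,i,j) = |Ω_{r v}|/(2 n_{r v} m_{r v}) + |Ω_{c v}|/(2 n_{c v} m_{c v})`. -/
noncomputable def pweight (w : Fin S.K → ℝ) (e : S.IdxE) : ℝ :=
  w (S.r e.1) / (2 * (S.n (S.r e.1) : ℝ) * (S.mcol (S.r e.1) : ℝ)) +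
  w (S.c e.1) / (2 * (S.n (S.c e.1) : ℝ) * (S.mcol (S.c e.1) : ℝ))

/-- The operator `R_Ω`. -/
noncomputable def Romega (w : Fin S.K → ℝ) {m : ℕ} (Ω : Fin m → S.IdxE) (X : S.Space) :
    S.Space :=
  ∑ s, (S.inner X (S.stdE (Ω s)) / S.pweight w (Ω s)) • S.stdE (Ω s)

/-- The sampling operator `P_Ω`. -/
noncomputable def Pomega {m : ℕ} (Ω : Fin m → S.IdxE) (X : S.Space) : S.Space :=
  ∑ s, S.inner X (S.stdE (Ω s)) • S.stdE (Ω s)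

/-- `κ_Ω(N) = 3|Ω| √(max_k |Ω_k|/(n_k m_k)) / (min_k |Ω_k|/(n_k m_k))`. -/
noncomputable def kappa (w : Fin S.K → ℝ) (m : ℕ) : ℝ :=
  3 * m * Real.sqrt (⨆ k, w k / ((S.n k : ℝ) * (S.mcol k : ℝ))) /
    (⨅ k, w k / ((S.n k : ℝ) * (S.mcol k : ℝ)))

instance : MeasurableSpace S.IdxE := ⊤

end CMStruct

/-!
The pairing `⟨𝒳, ·⟩` is a continuous linear functional, and the generators `[P_v(uuᵀ)]_v`
form a compact set (a continuous image of the unit sphere). On the compact convex hull of a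
compact set, a linear functional attains its maximum on an exposed face, which by Krein–Milman
has an extreme point; extreme points of the hull lie in the generating set, so the supremum over
the atoms is the supremum over the generators. Since `B(𝒳)` contains every `X_v` twice (once
transposed), `⟨𝒳, [P_v(uuᵀ)]_v⟩ = ½ uᵀ B(𝒳) u`, and the supremum over unit `u` is the Rayleigh
quotient `λ_max`. The spectral-norm bound is Cauchy–Schwarz: `uᵀAu ≤ ‖Au‖` for unit `u`.
-/

section ConvexHull

variable {E : Type*} [AddCommGroup E] [Module ℝ E] [TopologicalSpace E]
  [IsTopologicalAddGroup E] [ContinuousSMul ℝ E]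

open Set Function in
/-- By Carathéodory, `convexHull ℝ s` is the image of `stdSimplex × sᵈ` under
`(w, z) ↦ ∑ i, w i • z i`, with `d = finrank ℝ E + 1`. -/
theorem IsCompact.isCompact_convexHull [FiniteDimensional ℝ E] {s : Set E} (hs : IsCompact s) :
    IsCompact (convexHull ℝ s) := by
  rcases s.eq_empty_or_nonempty with rfl | ⟨z₀, hz₀⟩
  · simp
  let d := Module.finrank ℝ E + 1
  let combine : (Fin d → ℝ) × (Fin d → E) → E := fun p => ∑ i, p.1 i • p.2 i
  suffices convexHull ℝ s = combine '' (stdSimplex ℝ (Fin d) ×ˢ univ.pi fun _ => s) from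
    this ▸ ((isCompact_stdSimplex ℝ _).prod (isCompact_univ_pi fun _ => hs)).image (by fun_prop)
  refine Subset.antisymm (fun x hx => ?_) ?_
  · obtain ⟨ι, _, z, w, hzs, hind, hw0, hw1, rfl⟩ := eq_pos_convex_span_of_mem_convexHull hx
    have hcard : Fintype.card ι ≤ Fintype.card (Fin d) :=
      hind.card_le_finrank_succ.trans (by simpa [d] using Submodule.finrank_le _)
    obtain ⟨e⟩ := Embedding.nonempty_of_card_le hcard
    refine ⟨(extend e w 0, extend e z fun _ => z₀), ⟨⟨fun j => ?_, ?_⟩, fun j _ => ?_⟩, ?_⟩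
    · dsimp only
      rcases range_extend_subset e w 0 (mem_range_self j) with ⟨i, hi⟩ | ⟨k, -, hk⟩
      · exact hi ▸ (hw0 i).le
      · exact hk ▸ le_rfl
    · rw [← hw1]
      refine (Fintype.sum_of_injective e e.injective _ _ (fun j hj => ?_) fun i => ?_).symm
      · exact extend_apply' _ _ _ (by simpa using hj)
      · simp [e.injective.extend_apply]
    · dsimp only
      rcases range_extend_subset e z (fun _ => z₀) (mem_range_self j) with ⟨i, hi⟩ | ⟨k, -, hk⟩
      · exact hi ▸ hzs (mem_range_self i)
      · exact hk ▸ hz₀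
    · refine (Fintype.sum_of_injective e e.injective _ _ (fun j hj => ?_) fun i => ?_).symm
      · simp [extend_apply' _ _ _ (by simpa using hj)]
      · simp [e.injective.extend_apply]
  · rintro _ ⟨⟨w, z⟩, ⟨hw, hz⟩, rfl⟩
    exact (convex_convexHull ℝ s).sum_mem (fun i _ => hw.1 i) hw.2
      fun i _ => subset_convexHull ℝ s (hz i trivial)

variable [T2Space E] [LocallyConvexSpace ℝ E]

theorem IsCompact.exists_mem_extremePoints_isMaxOn {K : Set E} (hK : IsCompact K)
    (hne : K.Nonempty) (l : StrongDual ℝ E) : ∃ a ∈ K.extremePoints ℝ, IsMaxOn l K a := by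
  have hexp := ContinuousLinearMap.toExposed.isExposed (l := l) (A := K)
  obtain ⟨z, hzK, hz⟩ := hK.exists_isMaxOn hne l.continuous.continuousOn
  obtain ⟨a, ha⟩ := (hexp.isCompact hK).extremePoints_nonempty ⟨z, hzK, fun y hy => hz hy⟩
  exact ⟨a, hexp.isExtreme.extremePoints_subset_extremePoints ha, (extremePoints_subset ha).2⟩

open Set in
theorem IsCompact.sSup_image_extremePoints_convexHull [FiniteDimensional ℝ E] {s : Set E}
    (hs : IsCompact s) (l : StrongDual ℝ E) :
    sSup (l '' (convexHull ℝ s).extremePoints ℝ) = sSup (l '' s) := by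
  rcases s.eq_empty_or_nonempty with rfl | hne
  · simp
  obtain ⟨a, ha, hmax⟩ :=
    hs.isCompact_convexHull.exists_mem_extremePoints_isMaxOn (hne.mono (subset_convexHull ℝ s)) l
  have hext : IsGreatest (l '' (convexHull ℝ s).extremePoints ℝ) (l a) :=
    ⟨mem_image_of_mem l ha, forall_mem_image.2 fun x hx => hmax (extremePoints_subset hx)⟩
  have hgen : IsGreatest (l '' s) (l a) :=
    ⟨mem_image_of_mem l (extremePoints_convexHull_subset ha),
      forall_mem_image.2 fun x hx => hmax (subset_convexHull ℝ s hx)⟩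
  rw [hext.csSup_eq, hgen.csSup_eq]

end ConvexHull

section UnitSphere

variable {ι : Type*} [Fintype ι]

theorem isCompact_setOf_sum_sq_eq_one : IsCompact {x : ι → ℝ | ∑ i, x i ^ 2 = 1} := by
  refine (isCompact_univ_pi fun _ => isCompact_Icc (a := (-1 : ℝ)) (b := 1)).of_isClosed_subset
    (isClosed_eq (by fun_prop) continuous_const) fun x hx i _ => ?_
  have : x i ^ 2 ≤ 1 := hx ▸ Finset.single_le_sum (fun j _ => sq_nonneg (x j)) (Finset.mem_univ i)
  exact abs_le.mp (sq_le_one_iff_abs_le_one _ |>.mp this)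

instance : CompactSpace {x : ι → ℝ // ∑ i, x i ^ 2 = 1} :=
  isCompact_iff_compactSpace.mp isCompact_setOf_sum_sq_eq_one

theorem lambdaMax_le_specNorm (A : Matrix ι ι ℝ) : lambdaMax A ≤ specNorm A := by
  refine ciSup_mono (isCompact_range (by fun_prop)).bddAbove fun x => ?_
  calc x.1 ⬝ᵥ A *ᵥ x.1 ≤ √(∑ i, x.1 i ^ 2) * √(∑ i, (A *ᵥ x.1) i ^ 2) :=
        Real.sum_mul_le_sqrt_mul_sqrt _ _ _
    _ = √(∑ i, (A *ᵥ x.1) i ^ 2) := by rw [x.2, Real.sqrt_one, one_mul]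

end UnitSphere

instance Matrix.locallyConvexSpace {𝕜 α m n : Type*} [Semiring 𝕜] [PartialOrder 𝕜]
    [AddCommMonoid α] [Module 𝕜 α] [TopologicalSpace α] [LocallyConvexSpace 𝕜 α] :
    LocallyConvexSpace 𝕜 (Matrix m n α) :=
  Pi.locallyConvexSpace

namespace CMStruct

variable (S : CMStruct)

theorem inner_eq_sum (X Y : S.Space) : S.inner X Y = ∑ v, ∑ i, ∑ j, X v i j * Y v i j := by
  simp only [inner, trace, diag_apply, mul_apply, transpose_apply]
  exact Finset.sum_congr rfl fun v _ => Finset.sum_comm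

noncomputable def innerCLM (X : S.Space) : StrongDual ℝ S.Space :=
  LinearMap.toContinuousLinearMap
    { toFun := S.inner X
      map_add' := fun Y Z => by
        simp only [inner, Pi.add_apply, Matrix.mul_add, trace_add, Finset.sum_add_distrib]
      map_smul' := fun a Y => by
        simp only [inner, Pi.smul_apply, Matrix.mul_smul, trace_smul, RingHom.id_apply,
          Finset.smul_sum] }

@[simp] theorem innerCLM_apply (X Y : S.Space) : S.innerCLM X Y = S.inner X Y := rfl

def atomOf (u : S.Idx → ℝ) : S.Space := fun v => S.Pv v (vecMulVec u u)

theorem place_eq_sum_single (k₁ k₂ : Fin S.K) (M : Matrix (Fin (S.n k₁)) (Fin (S.n k₂)) ℝ) :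
    S.place k₁ k₂ M = ∑ i, ∑ j, single ⟨k₁, i⟩ ⟨k₂, j⟩ (M i j) := by
  ext a b
  simp only [place, of_apply, Matrix.sum_apply, single_apply, eq_comm]

theorem dotProduct_mulVec_place (k₁ k₂ : Fin S.K) (M : Matrix (Fin (S.n k₁)) (Fin (S.n k₂)) ℝ)
    (u : S.Idx → ℝ) :
    u ⬝ᵥ S.place k₁ k₂ M *ᵥ u = ∑ i, ∑ j, M i j * (u ⟨k₁, i⟩ * u ⟨k₂, j⟩) := by
  simp only [place_eq_sum_single, sum_mulVec, dotProduct_sum, single_mulVec_eq, dotProduct_smul,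
    dotProduct_single, smul_eq_mul, mul_one]
  exact Finset.sum_congr rfl fun i _ => Finset.sum_congr rfl fun j _ => by ring

theorem dotProduct_mulVec_B (X : S.Space) (u : S.Idx → ℝ) :
    u ⬝ᵥ S.B X *ᵥ u = 2 * S.inner X (S.atomOf u) := by
  simp only [B, sum_mulVec, add_mulVec, dotProduct_sum, dotProduct_add, dotProduct_mulVec_place,
    inner_eq_sum, atomOf, Pv, of_apply, vecMulVec_apply, transpose_apply]
  rw [Finset.mul_sum]
  refine Finset.sum_congr rfl fun v _ => ?_
  rw [Finset.sum_comm (γ := Fin (S.n (S.c v)))]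
  simp_rw [mul_comm (u ⟨S.c v, _⟩)]
  ring


theorem atomGen_eq_range :
    S.atomGen = Set.range fun u : {u : S.Idx → ℝ // ∑ a, u a ^ 2 = 1} => S.atomOf u := by
  ext A
  constructor
  · rintro ⟨u, hu, rfl⟩
    exact ⟨⟨u, hu⟩, rfl⟩
  · rintro ⟨⟨u, hu⟩, rfl⟩
    exact ⟨u, hu, rfl⟩

theorem isCompact_atomGen : IsCompact S.atomGen :=
  S.atomGen_eq_range ▸ isCompact_range (by unfold atomOf Pv; fun_prop)

theorem dualNorm_eq_iSup (X : S.Space) :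
    S.dualNorm X = ⨆ u : {u : S.Idx → ℝ // ∑ a, u a ^ 2 = 1}, S.inner X (S.atomOf u) := by
  have : {t | ∃ A ∈ S.atoms, t = S.inner X A} =
      S.innerCLM X '' (convexHull ℝ S.atomGen).extremePoints ℝ := by
    ext
    simp [atoms, eq_comm]
  rw [dualNorm, this, S.isCompact_atomGen.sSup_image_extremePoints_convexHull, atomGen_eq_range,
    ← Set.range_comp]
  rfl

end CMStruct

theorem dualNorm_eq_half_lambdaMax_general (S : CMStruct) (X : S.Space) :
    S.dualNorm X = (1/2 : ℝ) * lambdaMax (S.B X) ∧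
    S.dualNorm X ≤ (1/2 : ℝ) * specNorm (S.B X) := by
  have h : S.dualNorm X = 1 / 2 * lambdaMax (S.B X) := by
    rw [S.dualNorm_eq_iSup, lambdaMax, Real.mul_iSup_of_nonneg (by norm_num)]
    refine iSup_congr fun u => ?_
    rw [S.dotProduct_mulVec_B]
    ring
  exact ⟨h, h ▸ mul_le_mul_of_nonneg_left (lambdaMax_le_specNorm _) (by norm_num)⟩

/-- If `𝒢` is bipartite then `‖𝒳‖_𝒜^* = (1/2)·λ_max(B 𝒳)` and
consequently `‖𝒳‖_𝒜^* ≤ (1/2)·‖B 𝒳‖₂`. -/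
theorem dualNorm_eq_half_lambdaMax (S : CMStruct) (hbip : S.Bipartite) (X : S.Space) :
    S.dualNorm X = (1/2 : ℝ) * lambdaMax (S.B X) ∧
    S.dualNorm X ≤ (1/2 : ℝ) * specNorm (S.B X) :=
  dualNorm_eq_half_lambdaMax_general S X
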